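/- arXiv:1011.2860 — 2 statements merged into one kernel-verified Lean document; each statement's English description precedes it below -/
import Mathlib

section
/- Let R be a commutative ring, ≺ a fixed monomial ordering on B_R, and G an LM-reduced monic subset of the free R-algebra R⟨X⟩ = R⟨X₁,...,Xₙ⟩. Then G is an LM-reduced monic Gröbner basis of the ideal I = ⟨G⟩ if and only if for each pair g_i, g_j ∈ G (including g_i = g_j), every overlap element o(g_i,u; v,g_j) is reduced to zero by division by G, i.e. o(g_i,u; v,g_j) has a Gröbner representation Σ λ s g w with λ ∈ R, s,w ∈ B_R, g ∈ G and LM(s g w) ⪯ LM(o(g_i,u; v,g_j)) whenever λ ≠ 0. -/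
open scoped Classical

/-- Words in the alphabet `X₁,...,Xₙ`: the standard basis `B` of monomials of the free algebra. -/
abbrev Word (n : ℕ) : Type := FreeMonoid (Fin n)

/-- The free `R`-algebra `R⟨X₁,...,Xₙ⟩`, realized as the monoid algebra on words. -/
abbrev FreeAlg (R : Type) [CommRing R] (n : ℕ) : Type := MonoidAlgebra R (Word n)

/-- `v` divides `u` as words: `u = w * v * s` for some words `w, s`. -/
def WordDvd {n : ℕ} (v u : Word n) : Prop := ∃ w s : Word n, u = w * v * s

/-- A monomial ordering on the words in `X₁,...,Xₙ`: a well-ordering `≺` such that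
(M1) `u ≺ v` implies `w*u*s ≺ w*v*s`, and (M2) `w = u*v` implies `u ⪯ w` and `v ⪯ w`. -/
structure MonomialOrdering (n : ℕ) where
  lt : Word n → Word n → Prop
  strictTotal : IsStrictTotalOrder (Word n) lt
  wellFounded : WellFounded lt
  mul_compat : ∀ w u v s : Word n, lt u v → lt (w * u * s) (w * v * s)
  factor_le : ∀ u v : Word n, ¬ lt (u * v) u ∧ ¬ lt (u * v) v

namespace MonomialOrdering

/-- `u ⪯ v` for a monomial ordering. -/
def le {n : ℕ} (o : MonomialOrdering n) (u v : Word n) : Prop := u = v ∨ o.lt u v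

end MonomialOrdering

/-- The leading monomial `LM(f)` of `f`: the `≺`-greatest word occurring in `f`
(with junk value `1` if `f = 0`). -/
noncomputable def LM {R : Type} [CommRing R] {n : ℕ} (o : MonomialOrdering n)
    (f : FreeAlg R n) : Word n :=
  if h : ∃ w, w ∈ f.coeff.support ∧ ∀ u ∈ f.coeff.support, o.le u w then h.choose else 1

/-- The leading coefficient `LC(f)` of `f`: the coefficient of `LM(f)` in `f`. -/
noncomputable def LC {R : Type} [CommRing R] {n : ℕ} (o : MonomialOrdering n)
    (f : FreeAlg R n) : R := f.coeff (LM o f)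

/-- A subset `G` is monic if every `g ∈ G` is nonzero with leading coefficient `1`. -/
def IsMonicSet {R : Type} [CommRing R] {n : ℕ} (o : MonomialOrdering n)
    (G : Set (FreeAlg R n)) : Prop := ∀ g ∈ G, g ≠ 0 ∧ LC o g = 1

/-- `G` is a monic Gröbner basis of the two-sided ideal `I`: a monic subset of `I` such that
the leading monomial of every nonzero `f ∈ I` is divisible by `LM(g)` for some `g ∈ G`. -/
def IsMonicGB {R : Type} [CommRing R] {n : ℕ} (o : MonomialOrdering n)
    (G : Set (FreeAlg R n)) (I : TwoSidedIdeal (FreeAlg R n)) : Prop :=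
  (∀ g ∈ G, g ∈ I) ∧ IsMonicSet o G ∧
    ∀ f : FreeAlg R n, f ∈ I → f ≠ 0 → ∃ g ∈ G, WordDvd (LM o g) (LM o f)

/-- The word `u` viewed as a monomial (with coefficient `1`) of the free algebra. -/
noncomputable def mono (R : Type) [CommRing R] {n : ℕ} (u : Word n) : FreeAlg R n :=
  MonoidAlgebra.single u 1

/-- `f` has a Gröbner representation `f = Σ_{i} λ_i u_i g_i v_i` with
`LM(u_i g_i v_i) ⪯ LM(f)` whenever `λ_i ≠ 0`. -/
def HasGroebnerRep {R : Type} [CommRing R] {n : ℕ} (o : MonomialOrdering n)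
    (G : Set (FreeAlg R n)) (f : FreeAlg R n) : Prop :=
  ∃ (m : ℕ) (lam : Fin m → R) (u v : Fin m → Word n) (g : Fin m → FreeAlg R n),
    (∀ i, g i ∈ G) ∧
    f = ∑ i, lam i • (mono R (u i) * g i * mono R (v i)) ∧
    ∀ i, lam i ≠ 0 → o.le (LM o (mono R (u i) * g i * mono R (v i))) (LM o f)

/-- The set `N(G)` of normal words (mod `G`): words divisible by no `LM(g)`, `g ∈ G`. -/
def NSet {R : Type} [CommRing R] {n : ℕ} (o : MonomialOrdering n)
    (G : Set (FreeAlg R n)) : Set (Word n) :=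
  {u : Word n | ∀ g ∈ G, ¬ WordDvd (LM o g) u}

/-- `f` is a normal element (mod `G`): every word occurring in `f` is normal. -/
def IsNormal {R : Type} [CommRing R] {n : ℕ} (o : MonomialOrdering n)
    (G : Set (FreeAlg R n)) (f : FreeAlg R n) : Prop :=
  ∀ u ∈ f.coeff.support, u ∈ NSet o G

/-- `G` is LM-reduced: `LM(g) ∤ LM(g')` for distinct `g, g' ∈ G`. -/
def LMReduced {R : Type} [CommRing R] {n : ℕ} (o : MonomialOrdering n)
    (G : Set (FreeAlg R n)) : Prop :=
  ∀ g ∈ G, ∀ g' ∈ G, g ≠ g' → ¬ WordDvd (LM o g) (LM o g')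

/-!
Call `u·g·v`, for `g ∈ G` and words `u, v`, a sandwich with top word `u·LM(g)·v`; the elements of
`⟨G⟩` are exactly the `R`-combinations of sandwiches. If every overlap element reduces to zero,
two sandwiches with the same top word `W` differ by a combination of sandwiches with top words
`≺ W`: if the two occurrences of leading words in `W` are disjoint, the leading terms cancel
directly; nested occurrences force equal sandwiches because `G` is LM-reduced; overlapping
occurrences differ by `u·o(g,b; a,g')·v`, which has a Gröbner representation. So in a
representation of `f ∈ ⟨G⟩` whose greatest top word `W` is `≺`-minimal, the coefficient of `W`
cannot cancel, and `LM(f) = W` is divisible by a leading word of `G`. Conversely, for a Gröbner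
basis the division algorithm gives every element of `⟨G⟩`, in particular every overlap element,
a Gröbner representation.
-/

open Submodule

namespace MonomialOrdering

variable {n : ℕ} (o : MonomialOrdering n) {a b c : Word n}

theorem lt_irrefl (a : Word n) : ¬ o.lt a a := by
  have := o.strictTotal
  exact irrefl a

theorem lt_trans (hab : o.lt a b) (hbc : o.lt b c) : o.lt a c := by
  have := o.strictTotal
  exact _root_.trans hab hbc

theorem lt_of_le_of_lt (hab : o.le a b) (hbc : o.lt b c) : o.lt a c := by
  rcases hab with rfl | hab
  exacts [hbc, o.lt_trans hab hbc]

theorem lt_of_lt_of_le (hab : o.lt a b) (hbc : o.le b c) : o.lt a c := by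
  rcases hbc with rfl | hbc
  exacts [hab, o.lt_trans hab hbc]

theorem le_trans (hab : o.le a b) (hbc : o.le b c) : o.le a c := by
  rcases hab with rfl | hab
  exacts [hbc, Or.inr (o.lt_of_lt_of_le hab hbc)]

theorem not_lt_of_le (hab : o.le a b) : ¬ o.lt b a :=
  fun hba => o.lt_irrefl a (o.lt_of_le_of_lt hab hba)

theorem le_antisymm (hab : o.le a b) (hba : o.le b a) : a = b :=
  hab.resolve_right (o.not_lt_of_le hba)

theorem lt_of_le_of_ne (hab : o.le a b) (hne : a ≠ b) : o.lt a b :=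
  hab.resolve_left hne

theorem le_of_not_lt (h : ¬ o.lt a b) : o.le b a := by
  have := o.strictTotal
  rcases trichotomous_of o.lt a b with hab | rfl | hba
  exacts [absurd hab h, Or.inl rfl, Or.inr hba]

theorem le_mul_mul (w s : Word n) (hab : o.le a b) : o.le (w * a * s) (w * b * s) :=
  hab.imp (congrArg (w * · * s)) (o.mul_compat w a b s)

theorem exists_max (s : Finset (Word n)) (hs : s.Nonempty) : ∃ w ∈ s, ∀ u ∈ s, o.le u w := by
  have := o.strictTotal
  -- `linearOrderOfSTO o.lt` has `o.le` as its `≤`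
  let := linearOrderOfSTO o.lt
  exact s.exists_max_image id hs

end MonomialOrdering

namespace FreeMonoid

variable {α : Type*}

theorem exists_eq_mul_of_mul_eq_mul {a b c d : FreeMonoid α} (h : a * b = c * d)
    (hle : a.length ≤ c.length) : ∃ e, c = a * e ∧ b = e * d := by
  have hpre : a.toList <+: (c * d).toList := by
    rw [← h]
    exact List.prefix_append _ _
  obtain ⟨e, he⟩ := List.prefix_of_prefix_length_le hpre (List.prefix_append _ _) hle
  have hc : c = a * ofList e := toList.injective (by rw [toList_mul, ← he]; rfl)
  refine ⟨ofList e, hc, mul_left_cancel (a := a) ?_⟩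
  rw [h, hc, mul_assoc]

/-- Two occurrences of factors `p`, `p'` in the same word, the first starting no later than the
second, are disjoint, nested, or properly overlapping. -/
theorem disjoint_or_dvd_or_overlap {u p v u' p' v' : FreeMonoid α}
    (h : u * p * v = u' * p' * v') (hle : u.length ≤ u'.length) :
    (∃ m, u' = u * p * m ∧ v = m * p' * v') ∨
    (∃ a c, u' = u * a ∧ p = a * p' * c ∧ v' = c * v) ∨
    (∃ a b, u' = u * a ∧ v = b * v' ∧ p * b = a * p' ∧
      a.length < p.length ∧ b.length < p'.length) := by
  obtain ⟨a, rfl, hav⟩ := exists_eq_mul_of_mul_eq_mul (b := p * v) (d := p' * v')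
    (by simp only [← mul_assoc, h]) hle
  by_cases hdisj : p.length ≤ a.length
  · obtain ⟨m, rfl, hv⟩ := exists_eq_mul_of_mul_eq_mul hav hdisj
    exact Or.inl ⟨m, by rw [mul_assoc], by rw [hv, mul_assoc]⟩
  by_cases hnest : a.length + p'.length ≤ p.length
  · obtain ⟨c, hp, rfl⟩ := exists_eq_mul_of_mul_eq_mul (b := v') (d := v)
      (by rw [mul_assoc, hav]) (by rwa [length_mul])
    exact Or.inr (Or.inl ⟨a, c, rfl, by rw [hp, mul_assoc], rfl⟩)
  obtain ⟨b, hp, rfl⟩ := exists_eq_mul_of_mul_eq_mul (a := p) (c := a * p') (d := v')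
    (by rw [mul_assoc, hav]) (by rw [length_mul]; omega)
  have hlen := congrArg length hp
  simp only [length_mul] at hlen
  exact Or.inr (Or.inr ⟨a, b, rfl, rfl, hp.symm, by omega, by omega⟩)

end FreeMonoid

theorem not_wordDvd_of_length_lt {n : ℕ} {p a : Word n} (h : a.length < p.length) :
    ¬ WordDvd p a := by
  rintro ⟨w, s, rfl⟩
  simp only [FreeMonoid.length_mul] at h
  omega

section

variable {R : Type} [CommRing R] {n : ℕ} {o : MonomialOrdering n}

theorem lm_spec {f : FreeAlg R n} (hf : f ≠ 0) :
    LM o f ∈ f.coeff.support ∧ ∀ u ∈ f.coeff.support, o.le u (LM o f) := by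
  have hex : ∃ w, w ∈ f.coeff.support ∧ ∀ u ∈ f.coeff.support, o.le u w :=
    o.exists_max _ (Finsupp.support_nonempty_iff.2 (mt MonoidAlgebra.coeff_eq_zero.1 hf))
  rw [LM, dif_pos hex]
  exact hex.choose_spec

theorem le_lm {f : FreeAlg R n} {u : Word n} (hu : u ∈ f.coeff.support) : o.le u (LM o f) :=
  (lm_spec (by rintro rfl; simp at hu)).2 u hu

theorem lm_eq_of_forall_le {f : FreeAlg R n} {w : Word n} (hw : w ∈ f.coeff.support)
    (hmax : ∀ u ∈ f.coeff.support, o.le u w) : LM o f = w :=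
  o.le_antisymm (hmax _ (lm_spec (by rintro rfl; simp at hw)).1) (le_lm hw)

theorem lc_ne_zero {f : FreeAlg R n} (hf : f ≠ 0) : LC o f ≠ 0 :=
  Finsupp.mem_support_iff.1 (lm_spec hf).1

theorem lt_of_mem_support_sub {f h : FreeAlg R n} {W x : Word n}
    (hf : ∀ y ∈ f.coeff.support, o.le y W) (hh : ∀ y ∈ h.coeff.support, o.le y W)
    (hW : f.coeff W = h.coeff W) (hx : x ∈ (f - h).coeff.support) : o.lt x W := by
  refine o.lt_of_le_of_ne ?_ ?_
  · rcases Finset.mem_union.1 (Finsupp.support_sub hx) with hx | hx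
    exacts [hf x hx, hh x hx]
  · rintro rfl
    simp [MonoidAlgebra.coeff_sub, hW] at hx

theorem mono_mul_mono (a b : Word n) : mono R (a * b) = mono R a * mono R b := by
  rw [mono, mono, mono, MonoidAlgebra.single_mul_single, one_mul]

theorem mono_one : mono R (1 : Word n) = 1 := rfl

theorem eq_of_mem_support_mono {w x : Word n} (hx : x ∈ (mono R w).coeff.support) : x = w := by
  simpa [mono] using Finsupp.support_single_subset hx

theorem coeff_sandwich (u v w : Word n) (f : FreeAlg R n) :
    (mono R u * f * mono R v).coeff (u * w * v) = f.coeff w := by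
  simp [mono]

theorem exists_eq_sandwich_of_mem_support {u v x : Word n} {f : FreeAlg R n}
    (hx : x ∈ (mono R u * f * mono R v).coeff.support) :
    ∃ w ∈ f.coeff.support, x = u * w * v := by
  obtain ⟨y, hy, rfl⟩ :=
    Finset.mem_image.1 (MonoidAlgebra.support_coeff_mul_single_subset _ _ _ hx)
  obtain ⟨w, hw, rfl⟩ :=
    Finset.mem_image.1 (MonoidAlgebra.support_coeff_single_mul_subset _ _ _ hy)
  exact ⟨w, hw, rfl⟩

theorem le_of_mem_support_sandwich {u v x : Word n} {f : FreeAlg R n}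
    (hx : x ∈ (mono R u * f * mono R v).coeff.support) : o.le x (u * LM o f * v) := by
  obtain ⟨w, hw, rfl⟩ := exists_eq_sandwich_of_mem_support hx
  exact o.le_mul_mul u v (le_lm hw)

theorem lm_sandwich {f : FreeAlg R n} (hf : f ≠ 0) (u v : Word n) :
    LM o (mono R u * f * mono R v) = u * LM o f * v :=
  lm_eq_of_forall_le (by rw [Finsupp.mem_support_iff, coeff_sandwich]; exact lc_ne_zero hf)
    fun _ => le_of_mem_support_sandwich

/-- `f ∈ span R (sandwiches o G P)` says that `f` has a representation `Σ λᵢ·uᵢ·gᵢ·vᵢ` by `G`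
whose top words `uᵢ·LM(gᵢ)·vᵢ` all satisfy `P`. -/
def sandwiches (o : MonomialOrdering n) (G : Set (FreeAlg R n)) (P : Word n → Prop) :
    Set (FreeAlg R n) :=
  {x | ∃ g ∈ G, ∃ u v : Word n, P (u * LM o g * v) ∧ x = mono R u * g * mono R v}

variable {G : Set (FreeAlg R n)} {P Q : Word n → Prop}

theorem span_sandwiches_mono (h : ∀ w, P w → Q w) :
    span R (sandwiches o G P) ≤ span R (sandwiches o G Q) :=
  span_mono fun _ ⟨g, hg, u, v, hP, hx⟩ => ⟨g, hg, u, v, h _ hP, hx⟩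

theorem sandwich_mem_span_sandwiches {f : FreeAlg R n} (hf : f ∈ span R (sandwiches o G P))
    (a b : Word n) (h : ∀ w, P w → Q (a * w * b)) :
    mono R a * f * mono R b ∈ span R (sandwiches o G Q) := by
  induction hf using span_induction with
  | mem x hx =>
    obtain ⟨g, hg, u, v, hP, rfl⟩ := hx
    refine subset_span ⟨g, hg, a * u, v * b, by simpa only [mul_assoc] using h _ hP, ?_⟩
    simp only [mono_mul_mono, mul_assoc]
  | zero => simp
  | add x y _ _ hx hy => simpa only [mul_add, add_mul] using add_mem hx hy
  | smul c x _ hx => simpa only [mul_smul_comm, smul_mul_assoc] using smul_mem _ c hx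

theorem mul_mul_mem_span_sandwiches {g : FreeAlg R n} (hg : g ∈ G) {x y : FreeAlg R n}
    (h : ∀ a ∈ x.coeff.support, ∀ b ∈ y.coeff.support, P (a * LM o g * b)) :
    x * g * y ∈ span R (sandwiches o G P) := by
  have hx : x ∈ (span R (sandwiches o G P)).comap (LinearMap.mulRight R (g * y)) := by
    refine span_le.2 ?_ (MonoidAlgebra.mem_span_support_coeff x)
    rintro _ ⟨a, ha, rfl⟩
    have hy : y ∈ (span R (sandwiches o G P)).comap (LinearMap.mulLeft R (mono R a * g)) := by
      refine span_le.2 ?_ (MonoidAlgebra.mem_span_support_coeff y)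
      rintro _ ⟨b, hb, rfl⟩
      exact subset_span ⟨g, hg, a, b, h a ha b hb, rfl⟩
    simpa [mono, mul_assoc] using hy
  simpa [mul_assoc] using hx

theorem mem_span_sandwiches_of_mem_span {f : FreeAlg R n} (hf : f ∈ TwoSidedIdeal.span G) :
    f ∈ span R (sandwiches o G fun _ => True) := by
  rw [TwoSidedIdeal.mem_span_iff_mem_addSubgroup_closure] at hf
  refine (AddSubgroup.closure_le (span R _).toAddSubgroup).2 ?_ hf
  rintro _ ⟨_, ⟨x, -, g, hg, rfl⟩, y, -, rfl⟩
  exact mul_mul_mem_span_sandwiches hg fun _ _ _ _ => trivial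

theorem exists_le_of_mem_support {f : FreeAlg R n} (hf : f ∈ span R (sandwiches o G P))
    {x : Word n} (hx : x ∈ f.coeff.support) : ∃ w, P w ∧ o.le x w := by
  induction hf using span_induction generalizing x with
  | mem y hy =>
    obtain ⟨g, hg, u, v, hP, rfl⟩ := hy
    exact ⟨_, hP, le_of_mem_support_sandwich hx⟩
  | zero => simp at hx
  | add y z _ _ hy hz =>
    rcases Finset.mem_union.1 (Finsupp.support_add hx) with hx | hx
    exacts [hy hx, hz hx]
  | smul c y _ hy => exact hy (Finsupp.support_smul hx)

theorem coeff_eq_zero_of_mem_span_lt {f : FreeAlg R n} {W : Word n}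
    (hf : f ∈ span R (sandwiches o G (o.lt · W))) : f.coeff W = 0 := by
  by_contra hW
  obtain ⟨w, hwW, hWw⟩ := exists_le_of_mem_support hf (Finsupp.mem_support_iff.2 hW)
  exact o.not_lt_of_le hWw hwW

theorem exists_bound_of_mem_span_sandwiches {f : FreeAlg R n}
    (hf : f ∈ span R (sandwiches o G P)) :
    f = 0 ∨ ∃ W, P W ∧ f ∈ span R (sandwiches o G (o.le · W)) := by
  induction hf using span_induction with
  | mem x hx =>
    obtain ⟨g, hg, u, v, hP, rfl⟩ := hx
    exact Or.inr ⟨_, hP, subset_span ⟨g, hg, u, v, Or.inl rfl, rfl⟩⟩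
  | zero => exact Or.inl rfl
  | add x y _ _ hx hy =>
    obtain rfl | ⟨W₁, hW₁, hx⟩ := hx
    · simpa using hy
    obtain rfl | ⟨W₂, hW₂, hy⟩ := hy
    · simpa using Or.inr ⟨W₁, hW₁, hx⟩
    refine Or.inr ?_
    by_cases h : o.lt W₁ W₂
    · have hW : o.le W₁ W₂ := Or.inr h
      exact ⟨W₂, hW₂, add_mem (span_sandwiches_mono (fun _ hw => o.le_trans hw hW) hx) hy⟩
    · have hW : o.le W₂ W₁ := o.le_of_not_lt h
      exact ⟨W₁, hW₁, add_mem hx (span_sandwiches_mono (fun _ hw => o.le_trans hw hW) hy)⟩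
  | smul c x _ hx =>
    obtain rfl | ⟨W, hW, hx⟩ := hx
    · simp
    · exact Or.inr ⟨W, hW, smul_mem _ c hx⟩

theorem hasGroebnerRep_iff (hmonic : IsMonicSet o G) (f : FreeAlg R n) :
    HasGroebnerRep o G f ↔ f ∈ span R (sandwiches o G (o.le · (LM o f))) := by
  constructor
  · rintro ⟨m, lam, u, v, g, hg, hf, hle⟩
    have hsum : ∑ i, lam i • (mono R (u i) * g i * mono R (v i)) ∈
        span R (sandwiches o G (o.le · (LM o f))) := by
      refine sum_mem fun i _ => ?_
      by_cases hi : lam i = 0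
      · simp [hi]
      refine smul_mem _ _ (subset_span ⟨g i, hg i, u i, v i, ?_, rfl⟩)
      simpa only [lm_sandwich (hmonic _ (hg i)).1] using hle i hi
    rwa [← hf] at hsum
  · intro hf
    obtain ⟨m, c, x, hx⟩ := mem_span_set'.1 hf
    choose g hg u v hle hxe using fun i => (x i).2
    refine ⟨m, c, u, v, g, hg, ?_, fun i _ => ?_⟩
    · rw [← hx]
      exact Finset.sum_congr rfl fun i _ => by rw [hxe]
    · rw [lm_sandwich (hmonic _ (hg i)).1]
      exact hle i

def OverlapsReduceToZero (o : MonomialOrdering n) (G : Set (FreeAlg R n)) : Prop :=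
  ∀ gi ∈ G, ∀ gj ∈ G, ∀ u v : Word n,
    LM o gi * u = v * LM o gj → ¬ WordDvd (LM o gi) v → ¬ WordDvd (LM o gj) u →
      (gi * mono R u - mono R v * gj = 0 ∨
        HasGroebnerRep o G (gi * mono R u - mono R v * gj))

theorem mem_span_sandwiches_le_lm (hGB : IsMonicGB o G (TwoSidedIdeal.span G))
    {f : FreeAlg R n} (hf : f ∈ TwoSidedIdeal.span G) :
    f ∈ span R (sandwiches o G (o.le · (LM o f))) := by
  suffices ∀ W, ∀ f ∈ TwoSidedIdeal.span G, LM o f = W →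
      f ∈ span R (sandwiches o G (o.le · W)) from this _ f hf rfl
  intro W
  induction W using o.wellFounded.induction with
  | _ W ih =>
  intro f hf hW
  by_cases hf0 : f = 0
  · simp [hf0]
  obtain ⟨g, hg, u, v, hdvd⟩ := hGB.2.2 f hf hf0
  have hs : mono R u * g * mono R v ∈ span R (sandwiches o G (o.le · W)) :=
    subset_span ⟨g, hg, u, v, Or.inl (hdvd.symm.trans hW), rfl⟩
  have hsI : mono R u * g * mono R v ∈ TwoSidedIdeal.span G :=
    TwoSidedIdeal.mul_mem_right _ _ _
      (TwoSidedIdeal.mul_mem_left _ _ _ (TwoSidedIdeal.subset_span hg))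
  -- subtracting `LC(f)·u·g·v` cancels the leading term of `f`
  set f' := f - LC o f • (mono R u * g * mono R v) with hf'
  have hf'I : f' ∈ TwoSidedIdeal.span G := by
    rw [hf', Algebra.smul_def]
    exact TwoSidedIdeal.sub_mem _ hf (TwoSidedIdeal.mul_mem_left _ _ _ hsI)
  have hf'lt : ∀ x ∈ f'.coeff.support, o.lt x W := by
    refine fun x hx => lt_of_mem_support_sub (fun y hy => hW ▸ le_lm hy) (fun y hy => ?_) ?_ hx
    · rw [← hW, hdvd]
      exact le_of_mem_support_sandwich (Finsupp.support_smul hy)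
    · rw [← hW, MonoidAlgebra.coeff_smul_apply, hdvd, coeff_sandwich, ← hdvd]
      simp [LC, show g.coeff (LM o g) = 1 from (hGB.2.1 g hg).2]
  have hf'W : f' ∈ span R (sandwiches o G (o.le · W)) := by
    by_cases hf'0 : f' = 0
    · simp [hf'0]
    have hlt := hf'lt _ (lm_spec (o := o) hf'0).1
    exact span_sandwiches_mono (fun _ hw => o.le_trans hw (Or.inr hlt)) (ih _ hlt f' hf'I rfl)
  simpa [hf'] using add_mem hf'W (smul_mem _ (LC o f) hs)

theorem overlapsReduceToZero_of_isMonicGB (hGB : IsMonicGB o G (TwoSidedIdeal.span G)) :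
    OverlapsReduceToZero o G := fun _ hgi _ hgj _ _ _ _ _ =>
  Or.inr <| (hasGroebnerRep_iff hGB.2.1 _).2 <| mem_span_sandwiches_le_lm hGB <|
    TwoSidedIdeal.sub_mem _ (TwoSidedIdeal.mul_mem_right _ _ _ (TwoSidedIdeal.subset_span hgi))
      (TwoSidedIdeal.mul_mem_left _ _ _ (TwoSidedIdeal.subset_span hgj))

theorem lt_lm_of_mem_support_sub_mono {g : FreeAlg R n} (hg : LC o g = 1) {x : Word n}
    (hx : x ∈ (g - mono R (LM o g)).coeff.support) : o.lt x (LM o g) := by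
  refine lt_of_mem_support_sub (fun _ => le_lm) (fun y hy => Or.inl ?_) ?_ hx
  · exact eq_of_mem_support_mono hy
  · simpa [mono, LC] using hg

theorem sandwich_sub_sandwich_mem_span_lt_of_disjoint (hmonic : IsMonicSet o G)
    {g g' : FreeAlg R n} (hg : g ∈ G) (hg' : g' ∈ G) (u m v' : Word n) :
    mono R u * g * mono R (m * LM o g' * v') - mono R (u * LM o g * m) * g' * mono R v' ∈
      span R (sandwiches o G (o.lt · (u * LM o g * m * LM o g' * v'))) := by
  set p := LM o g
  set p' := LM o g'
  -- split `g = p + (g - p)` and `g' = p' + (g' - p')`: the terms `u·p·m·p'·v'` cancel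
  have hid : mono R u * g * mono R (m * p' * v') - mono R (u * p * m) * g' * mono R v' =
      mono R u * (g - mono R p) * mono R m * g' * mono R v' -
        mono R u * g * (mono R m * (g' - mono R p') * mono R v') := by
    simp only [mono_mul_mono]
    noncomm_ring
  rw [hid]
  refine sub_mem (mul_mul_mem_span_sandwiches hg' fun a ha b hb => ?_)
    (mul_mul_mem_span_sandwiches hg fun a ha b hb => ?_)
  · obtain ⟨s, hs, rfl⟩ := exists_eq_sandwich_of_mem_support ha
    rw [eq_of_mem_support_mono hb]
    simpa only [mul_assoc] using
      o.mul_compat u s p (m * p' * v') (lt_lm_of_mem_support_sub_mono (hmonic g hg).2 hs)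
  · rw [eq_of_mem_support_mono ha]
    obtain ⟨s, hs, rfl⟩ := exists_eq_sandwich_of_mem_support hb
    simpa only [mul_assoc] using
      o.mul_compat (u * p * m) s p' v' (lt_lm_of_mem_support_sub_mono (hmonic g' hg').2 hs)

theorem sandwich_sub_sandwich_mem_span_lt_of_overlap (hmonic : IsMonicSet o G)
    (hov : OverlapsReduceToZero o G) {g g' : FreeAlg R n} (hg : g ∈ G) (hg' : g' ∈ G)
    {a b : Word n} (hab : LM o g * b = a * LM o g') (ha : a.length < (LM o g).length)
    (hb : b.length < (LM o g').length) (u v' : Word n) :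
    mono R u * g * mono R (b * v') - mono R (u * a) * g' * mono R v' ∈
      span R (sandwiches o G (o.lt · (u * LM o g * b * v'))) := by
  set q := g * mono R b - mono R a * g' with hq
  have hid : mono R u * g * mono R (b * v') - mono R (u * a) * g' * mono R v' =
      mono R u * q * mono R v' := by
    simp only [hq, mono_mul_mono]
    noncomm_ring
  rw [hid]
  by_cases hq0 : q = 0
  · simp [hq0]
  have hrep := (hasGroebnerRep_iff hmonic q).1 ((hov g hg g' hg' b a hab
    (not_wordDvd_of_length_lt ha) (not_wordDvd_of_length_lt hb)).resolve_left hq0)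
  have hlt : o.lt (LM o q) (LM o g * b) := by
    refine lt_of_mem_support_sub (fun y hy => ?_) (fun y hy => ?_) ?_ (lm_spec hq0).1
    · simpa using le_of_mem_support_sandwich (o := o) (u := 1) (by rwa [mono_one, one_mul])
    · simpa [hab] using le_of_mem_support_sandwich (o := o) (v := 1) (by rwa [mono_one, mul_one])
    · calc (g * mono R b).coeff (LM o g * b) = LC o g := by simp [mono, LC]
        _ = LC o g' := by rw [(hmonic g hg).2, (hmonic g' hg').2]
        _ = (mono R a * g').coeff (LM o g * b) := by rw [hab]; simp [mono, LC]
  refine sandwich_mem_span_sandwiches hrep u v' fun w hw => ?_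
  simpa only [mul_assoc] using
    o.lt_of_le_of_lt (o.le_mul_mul u v' hw) (o.mul_compat u _ _ v' hlt)

theorem sandwich_sub_sandwich_mem_span_lt (hmonic : IsMonicSet o G) (hred : LMReduced o G)
    (hov : OverlapsReduceToZero o G) {g g' : FreeAlg R n} (hg : g ∈ G) (hg' : g' ∈ G)
    {u v u' v' : Word n} (h : u * LM o g * v = u' * LM o g' * v') :
    mono R u * g * mono R v - mono R u' * g' * mono R v' ∈
      span R (sandwiches o G (o.lt · (u * LM o g * v))) := by
  wlog hle : u.length ≤ u'.length generalizing g g' u v u' v'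
  · rw [← neg_sub, h]
    exact neg_mem (this hg' hg h.symm (by omega))
  rcases FreeMonoid.disjoint_or_dvd_or_overlap h hle with
    ⟨m, rfl, rfl⟩ | ⟨a, c, rfl, hp, rfl⟩ | ⟨a, b, rfl, rfl, hab, ha, hb⟩
  · simpa only [mul_assoc] using sandwich_sub_sandwich_mem_span_lt_of_disjoint hmonic hg hg' u m v'
  · obtain rfl : g = g' := by_contra fun hne => hred g' hg' g hg (Ne.symm hne) ⟨a, c, hp⟩
    have hlen := congrArg FreeMonoid.length hp
    simp only [FreeMonoid.length_mul] at hlen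
    obtain rfl : a = 1 := FreeMonoid.length_eq_zero.1 (by omega)
    obtain rfl : c = 1 := FreeMonoid.length_eq_zero.1 (by omega)
    simp
  · simpa only [mul_assoc] using
      sandwich_sub_sandwich_mem_span_lt_of_overlap hmonic hov hg hg' hab ha hb u v'

theorem span_sandwiches_le_le_sup (hmonic : IsMonicSet o G) (hred : LMReduced o G)
    (hov : OverlapsReduceToZero o G) {g₀ : FreeAlg R n} (hg₀ : g₀ ∈ G) (u₀ v₀ : Word n) :
    span R (sandwiches o G (o.le · (u₀ * LM o g₀ * v₀))) ≤
      R ∙ (mono R u₀ * g₀ * mono R v₀) ⊔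
        span R (sandwiches o G (o.lt · (u₀ * LM o g₀ * v₀))) := by
  refine span_le.2 ?_
  rintro _ ⟨g, hg, u, v, htop | hlt, rfl⟩
  · refine mem_sup.2 ⟨_, mem_span_singleton_self _, _, ?_, add_sub_cancel _ _⟩
    simpa only [htop] using sandwich_sub_sandwich_mem_span_lt hmonic hred hov hg hg₀ htop
  · exact mem_sup_right (subset_span ⟨g, hg, u, v, hlt, rfl⟩)

theorem isMonicGB_of_overlapsReduceToZero (hmonic : IsMonicSet o G) (hred : LMReduced o G)
    (hov : OverlapsReduceToZero o G) : IsMonicGB o G (TwoSidedIdeal.span G) := by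
  refine ⟨fun g hg => TwoSidedIdeal.subset_span hg, hmonic, fun f hf hf0 => ?_⟩
  obtain hf0' | ⟨W, -, hfW⟩ :=
    exists_bound_of_mem_span_sandwiches (mem_span_sandwiches_of_mem_span (o := o) hf)
  · exact absurd hf0' hf0
  induction W using o.wellFounded.induction with
  | _ W ih =>
  have descend (h : f ∈ span R (sandwiches o G (o.lt · W))) :
      ∃ g ∈ G, WordDvd (LM o g) (LM o f) := by
    obtain h0 | ⟨W', hW', hfW'⟩ := exists_bound_of_mem_span_sandwiches h
    exacts [absurd h0 hf0, ih W' hW' hfW']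
  by_cases htop : ∃ g ∈ G, ∃ u v : Word n, u * LM o g * v = W
  swap
  · refine descend (span_le.2 ?_ hfW)
    rintro _ ⟨g, hg, u, v, hw, rfl⟩
    exact subset_span ⟨g, hg, u, v, hw.resolve_left fun he => htop ⟨g, hg, u, v, he⟩, rfl⟩
  obtain ⟨g, hg, u, v, rfl⟩ := htop
  obtain ⟨_, hc, r, hr, rfl⟩ := mem_sup.1 (span_sandwiches_le_le_sup hmonic hred hov hg u v hfW)
  obtain ⟨c, rfl⟩ := mem_span_singleton.1 hc
  by_cases hc0 : c = 0
  · exact descend (by simpa [hc0] using hr)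
  have hcoeff : (c • (mono R u * g * mono R v) + r).coeff (u * LM o g * v) = c := by
    simp [coeff_sandwich, coeff_eq_zero_of_mem_span_lt hr,
      show g.coeff (LM o g) = 1 from (hmonic g hg).2]
  refine ⟨g, hg, u, v, lm_eq_of_forall_le (by rwa [Finsupp.mem_support_iff, hcoeff]) ?_⟩
  intro x hx
  obtain ⟨w, hw, hxw⟩ := exists_le_of_mem_support hfW hx
  exact o.le_trans hxw hw

end

/-- **Theorem 2.5 (Termination theorem).** Let `G` be an LM-reduced monic subset of the free
`R`-algebra `R⟨X₁,...,Xₙ⟩`.  Then `G` is an (LM-reduced monic) Gröbner basis of the ideal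
`I = ⟨G⟩` if and only if for each pair `gᵢ, gⱼ ∈ G` (including `gᵢ = gⱼ`), every overlap
element `o(gᵢ,u; v,gⱼ) = gᵢ·u − v·gⱼ` (where `LM(gᵢ)·u = v·LM(gⱼ)`, `LM(gᵢ) ∤ v`,
`LM(gⱼ) ∤ u`) is reduced to zero by division by `G`, i.e. is zero or has a Gröbner
representation. -/
theorem termination_theorem {R : Type} [CommRing R] {n : ℕ} (o : MonomialOrdering n)
    (G : Set (FreeAlg R n)) (hmonic : IsMonicSet o G) (hred : LMReduced o G) :
    IsMonicGB o G (TwoSidedIdeal.span G) ↔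
      ∀ gi ∈ G, ∀ gj ∈ G, ∀ u v : Word n,
        LM o gi * u = v * LM o gj → ¬ WordDvd (LM o gi) v → ¬ WordDvd (LM o gj) u →
          (gi * mono R u - mono R v * gj = 0 ∨
            HasGroebnerRep o G (gi * mono R u - mono R v * gj)) :=
  ⟨overlapsReduceToZero_of_isMonicGB, isMonicGB_of_overlapsReduceToZero hmonic hred⟩
end

section
/- Let R be a commutative ring equipped with an exhaustive Γ-filtration FR = {F_γR}_{γ∈Γ}, where Γ is a totally ordered monoid, and set R₀ = F₀R. Let I be an ideal of the free R-algebra R⟨X⟩ = R⟨X₁,...,Xₙ⟩ generated by a subset G ⊆ R₀⟨X⟩ which is a monic Gröbner basis of I in R⟨X⟩ with respect to a monomial ordering ≺ on B_R, and assume LM(g) ≠ 1 for every g ∈ G. Then the R-algebra A = R⟨X⟩/I can be endowed with the exhaustive Γ-filtration FA = {F_γA}_{γ∈Γ}, where F_γA = { Σ_i λ_i w̄_i : λ_i ∈ F_γR, w̄_i ∈ N̄(G) } and N̄(G) is the canonical image of N(G) in A, and this filtration satisfies F_γR = R ∩ F_γA for every γ ∈ Γ (i.e. FR extends naturally to FA).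 -/
open scoped Classical

/-- An exhaustive `Γ`-filtration on a ring `S`, where `Γ` is a totally ordered
(not necessarily commutative) additive monoid: a family of additive subgroups
`F γ` of `S` with (F1) `S = ∪_γ F γ`, (F2) `F γ₁ ⊆ F γ₂` for `γ₁ < γ₂`,
(F3) `F γ · F τ ⊆ F (γ + τ)`, (F4) `1 ∈ F 0`. -/
structure RingFiltration (Γ : Type) [AddMonoid Γ] [LinearOrder Γ] (S : Type) [Ring S] where
  F : Γ → AddSubgroup S
  exhaustive : ∀ s : S, ∃ γ : Γ, s ∈ F γ
  mono : ∀ ⦃γ₁ γ₂ : Γ⦄, γ₁ < γ₂ → F γ₁ ≤ F γ₂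
  mul_mem : ∀ ⦃γ τ : Γ⦄ ⦃a b : S⦄, a ∈ F γ → b ∈ F τ → a * b ∈ F (γ + τ)
  one_mem : 1 ∈ F 0

/-- The quotient ring `A = R⟨X₁,...,Xₙ⟩/I` of the free algebra by a two-sided ideal `I`. -/
abbrev QuotAlg {R : Type} [CommRing R] {n : ℕ} (I : TwoSidedIdeal (FreeAlg R n)) : Type :=
  RingQuot (fun a b : FreeAlg R n => a - b ∈ I)

/-- The canonical projection `R⟨X₁,...,Xₙ⟩ → A = R⟨X⟩/I`. -/
noncomputable def quotProj {R : Type} [CommRing R] {n : ℕ}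
    (I : TwoSidedIdeal (FreeAlg R n)) : FreeAlg R n →+* QuotAlg I :=
  RingQuot.mkRingHom (fun a b : FreeAlg R n => a - b ∈ I)

/-- The `Γ`-filtration `F_γA = {Σᵢ λᵢ·w̄ᵢ : λᵢ ∈ F_γR, wᵢ ∈ N(G)}` on `A = R⟨X⟩/I`
induced by a filtration of `R` and the normal words mod `G`:  it is the additive subgroup of
`A` generated by the classes of the elements `λ·u` with `λ ∈ F_γR` and `u ∈ N(G)`. -/
noncomputable def inducedFiltration {Γ : Type} [AddMonoid Γ] [LinearOrder Γ]
    {R : Type} [CommRing R] {n : ℕ} (FR : RingFiltration Γ R) (o : MonomialOrdering n)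
    (G : Set (FreeAlg R n)) (I : TwoSidedIdeal (FreeAlg R n)) (γ : Γ) :
    AddSubgroup (QuotAlg I) :=
  AddSubgroup.closure
    {x : QuotAlg I | ∃ lam ∈ FR.F γ, ∃ u ∈ NSet o G,
      x = quotProj I (MonoidAlgebra.single u lam)}
/-!
Every word is congruent modulo `I` to an `R₀`-combination of normal words: rewrite a divisible
word `w·LM(g)·s` as `w·(LM(g) - g)·s`, whose words are `≺`-smaller and whose coefficients stay in
`R₀` because `g ∈ R₀⟨X⟩` is monic; this terminates since `≺` is a well-ordering. Hence a
polynomial with coefficients in `F_γR` has a normal form with coefficients in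
`F_γR · R₀ ⊆ F_γR`, so its class lies in `F_γA`; (F1), (F3) and (F4) follow. Conversely, normal
forms are unique because `G` is a Gröbner basis, and `1` is a normal word because no `LM(g)` is
`1`; so if `λ ∈ R` has a representative with coefficients in `F_γR`, that representative is `λ`
itself.
-/

namespace RingFiltration

variable {Γ : Type} [AddMonoid Γ] [LinearOrder Γ] {R : Type} [Ring R] (FR : RingFiltration Γ R)

lemma monotone : Monotone FR.F := fun _ _ h =>
  h.lt_or_eq.elim (fun h => FR.mono h) (fun h => h ▸ le_rfl)

def zeroSubring : Subring R :=
  { FR.F 0 with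
    mul_mem' := fun ha hb => by simpa using FR.mul_mem ha hb
    one_mem' := FR.one_mem }

lemma exists_forall_apply_mem {α : Type} (f : α →₀ R) : ∃ γ, ∀ a, f a ∈ FR.F γ := by
  induction f using Finsupp.induction_linear with
  | zero => exact ⟨0, fun _ => zero_mem _⟩
  | add f g hf hg =>
    obtain ⟨γ, hγ⟩ := hf
    obtain ⟨τ, hτ⟩ := hg
    exact ⟨max γ τ, fun a => add_mem (FR.monotone le_sup_left (hγ a))
      (FR.monotone le_sup_right (hτ a))⟩
  | single a c =>
    obtain ⟨γ, hγ⟩ := FR.exhaustive c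
    refine ⟨γ, fun b => ?_⟩
    rw [Finsupp.single_apply]
    split_ifs
    exacts [hγ, zero_mem _]

end RingFiltration

section CoeffMem

variable {R M : Type} [Ring R]

lemma coeff_single_mem {S : AddSubgroup R} {c : R} (hc : c ∈ S) (m : M) :
    ∀ m', (MonoidAlgebra.single m c).coeff m' ∈ S := fun m' => by
  rw [MonoidAlgebra.coeff_single, Finsupp.single_apply]
  split_ifs
  exacts [hc, zero_mem _]

lemma coeff_mul_mem [Mul M] {A B C : AddSubgroup R}
    (hmul : ∀ ⦃a b⦄, a ∈ A → b ∈ B → a * b ∈ C)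
    {p q : MonoidAlgebra R M} (hp : ∀ m, p.coeff m ∈ A) (hq : ∀ m, q.coeff m ∈ B) :
    ∀ m, (p * q).coeff m ∈ C := fun m => by
  rw [MonoidAlgebra.coeff_mul]
  refine sum_mem fun u _ => sum_mem fun v _ => ?_
  dsimp only
  split_ifs
  exacts [hmul (hp u) (hq v), zero_mem _]

end CoeffMem

section Words

variable {R : Type} [CommRing R] {n : ℕ}

lemma WordDvd.eq_one {v : Word n} (h : WordDvd v 1) : v = 1 := by
  obtain ⟨w, s, h⟩ := h
  have hlen := congrArg FreeMonoid.length h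
  simp only [FreeMonoid.length_one, FreeMonoid.length_mul] at hlen
  exact FreeMonoid.length_eq_zero.1 (by omega)

lemma one_mem_NSet {o : MonomialOrdering n} {G : Set (FreeAlg R n)}
    (hLM1 : ∀ g ∈ G, LM o g ≠ 1) : (1 : Word n) ∈ NSet o G :=
  fun g hg hdvd => hLM1 g hg hdvd.eq_one

lemma LM_spec (o : MonomialOrdering n) {f : FreeAlg R n} (hf : f ≠ 0) :
    LM o f ∈ f.coeff.support ∧ ∀ u ∈ f.coeff.support, o.le u (LM o f) := by
  have hmax : ∃ w, w ∈ f.coeff.support ∧ ∀ u ∈ f.coeff.support, o.le u w := by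
    have := o.strictTotal
    let := linearOrderOfSTO o.lt
    exact Finset.exists_max_image _ id
      (Finsupp.support_nonempty_iff.2 (mt MonoidAlgebra.coeff_eq_zero.1 hf))
  rw [LM, dif_pos hmax]
  exact hmax.choose_spec

lemma lt_LM_of_mem_support_sub {o : MonomialOrdering n} {g : FreeAlg R n} (hg : g ≠ 0)
    (hLC : LC o g = 1) {v : Word n}
    (hv : v ∈ (MonoidAlgebra.single (LM o g) 1 - g).coeff.support) : o.lt v (LM o g) := by
  rw [Finsupp.mem_support_iff, MonoidAlgebra.coeff_sub, Finsupp.sub_apply,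
    MonoidAlgebra.coeff_single, Finsupp.single_apply] at hv
  split_ifs at hv with hL
  · exact absurd (by rw [← hLC, LC, hL, sub_self]) hv
  · have hvg : v ∈ g.coeff.support := Finsupp.mem_support_iff.2 fun h => hv (by simp [h])
    exact ((LM_spec o hg).2 v hvg).resolve_left (Ne.symm hL)

end Words

section NormalForms

variable {R : Type} [CommRing R] {n : ℕ} {o : MonomialOrdering n} {G : Set (FreeAlg R n)}
  {I : TwoSidedIdeal (FreeAlg R n)}

variable (o G) in
def normalElements (S : AddSubgroup R) : AddSubgroup (FreeAlg R n) where
  carrier := {p | IsNormal o G p ∧ ∀ w, p.coeff w ∈ S}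
  zero_mem' := ⟨fun _ h => by simp at h, fun _ => zero_mem _⟩
  add_mem' := fun {p q} hp hq => by
    refine ⟨fun w hw => ?_, fun w => by simpa using add_mem (hp.2 w) (hq.2 w)⟩
    rw [MonoidAlgebra.coeff_add] at hw
    exact (Finset.mem_union.1 (Finsupp.support_add hw)).elim (hp.1 w) (hq.1 w)
  neg_mem' := fun {p} hp =>
    ⟨fun w hw => hp.1 w (by simpa using hw), fun w => by simpa using neg_mem (hp.2 w)⟩

lemma single_mem_normalElements {S : AddSubgroup R} {u : Word n} {c : R} (hu : u ∈ NSet o G)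
    (hc : c ∈ S) : MonoidAlgebra.single u c ∈ normalElements o G S :=
  ⟨fun _ hw => Finset.mem_singleton.1 (Finsupp.support_single_subset hw) ▸ hu,
    coeff_single_mem hc u⟩

lemma smul_mem_normalElements {S T U : AddSubgroup R}
    (hmul : ∀ ⦃a b⦄, a ∈ S → b ∈ T → a * b ∈ U)
    {c : R} {p : FreeAlg R n} (hc : c ∈ S) (hp : p ∈ normalElements o G T) :
    c • p ∈ normalElements o G U :=
  ⟨fun w hw => hp.1 w (Finsupp.support_smul (by rwa [MonoidAlgebra.coeff_smul] at hw)),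
    fun w => by simpa using hmul hc (hp.2 w)⟩

lemma smul_mem_twoSidedIdeal (c : R) {x : FreeAlg R n} (hx : x ∈ I) : c • x ∈ I :=
  Algebra.smul_def c x ▸ I.mul_mem_left _ _ hx

lemma exists_normal_sub_mem_of_forall_single {R₀ S : AddSubgroup R}
    (hmul : ∀ ⦃a b⦄, a ∈ S → b ∈ R₀ → a * b ∈ S) {p : FreeAlg R n} (hp : ∀ w, p.coeff w ∈ S)
    (hwords : ∀ t ∈ p.coeff.support,
      ∃ r ∈ normalElements o G R₀, MonoidAlgebra.single t 1 - r ∈ I) :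
    ∃ r ∈ normalElements o G S, p - r ∈ I := by
  rw [← MonoidAlgebra.sum_coeff_single p, Finsupp.sum]
  refine Finset.sum_induction _ (fun x => ∃ r ∈ normalElements o G S, x - r ∈ I) ?_ ?_ ?_
  · rintro a b ⟨r, hr, har⟩ ⟨r', hr', hbr'⟩
    exact ⟨r + r', add_mem hr hr', by rw [add_sub_add_comm]; exact I.add_mem har hbr'⟩
  · exact ⟨0, zero_mem _, by rw [sub_zero]; exact I.zero_mem⟩
  · intro t ht
    obtain ⟨r, hr, htr⟩ := hwords t ht
    refine ⟨p.coeff t • r, smul_mem_normalElements hmul (hp t) hr, ?_⟩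
    have : MonoidAlgebra.single t (p.coeff t) - p.coeff t • r =
        p.coeff t • (MonoidAlgebra.single t 1 - r) := by
      rw [smul_sub, MonoidAlgebra.smul_single, smul_eq_mul, mul_one]
    exact this ▸ smul_mem_twoSidedIdeal _ htr

lemma exists_normal_sub_mem_single (R₀ : Subring R) (hG : ∀ g ∈ G, ∀ u, g.coeff u ∈ R₀)
    (hGI : ∀ g ∈ G, g ∈ I) (hmonic : IsMonicSet o G) (u : Word n) :
    ∃ r ∈ normalElements o G R₀.toAddSubgroup, MonoidAlgebra.single u 1 - r ∈ I := by
  induction u using o.wellFounded.induction with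
  | _ u ih =>
  by_cases hu : u ∈ NSet o G
  · exact ⟨_, single_mem_normalElements hu R₀.one_mem, by rw [sub_self]; exact I.zero_mem⟩
  obtain ⟨g, hg, w, s, rfl⟩ : ∃ g ∈ G, WordDvd (LM o g) u := by simpa [NSet] using hu
  obtain ⟨hg0, hLC⟩ := hmonic g hg
  set d := MonoidAlgebra.single w (1 : R) * (MonoidAlgebra.single (LM o g) 1 - g) *
    MonoidAlgebra.single s 1
  have hR₀ : ∀ ⦃a b⦄, a ∈ R₀.toAddSubgroup → b ∈ R₀.toAddSubgroup → a * b ∈ R₀.toAddSubgroup :=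
    fun _ _ => R₀.mul_mem
  have hd_coeff : ∀ t, d.coeff t ∈ R₀ :=
    coeff_mul_mem hR₀ (coeff_mul_mem hR₀ (coeff_single_mem R₀.one_mem w)
      fun t => sub_mem (coeff_single_mem R₀.one_mem _ t) (hG g hg t))
      (coeff_single_mem R₀.one_mem s)
  have hd_lt : ∀ t ∈ d.coeff.support, o.lt t (w * LM o g * s) := by
    intro t ht
    obtain ⟨t', ht', rfl⟩ :=
      Finset.mem_image.1 (MonoidAlgebra.support_coeff_mul_single_subset _ _ _ ht)
    obtain ⟨v, hv, rfl⟩ :=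
      Finset.mem_image.1 (MonoidAlgebra.support_coeff_single_mul_subset _ _ _ ht')
    exact o.mul_compat w v _ s (lt_LM_of_mem_support_sub hg0 hLC hv)
  obtain ⟨r, hr, hdr⟩ := exists_normal_sub_mem_of_forall_single hR₀ hd_coeff
    fun t ht => ih t (hd_lt t ht)
  have hud : MonoidAlgebra.single (w * LM o g * s) 1 - d =
      MonoidAlgebra.single w 1 * g * MonoidAlgebra.single s 1 := by
    simp only [d, mul_sub, sub_mul, MonoidAlgebra.single_mul_single, mul_one, sub_sub_cancel]
  refine ⟨r, hr, ?_⟩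
  rw [← sub_add_sub_cancel _ d, hud]
  exact I.add_mem (I.mul_mem_right _ _ (I.mul_mem_left _ _ (hGI g hg))) hdr

lemma eq_zero_of_isNormal_of_mem (hGB : IsMonicGB o G I) {p : FreeAlg R n}
    (hp : IsNormal o G p) (hpI : p ∈ I) : p = 0 := by
  by_contra h0
  obtain ⟨g, hg, hdvd⟩ := hGB.2.2 p hpI h0
  exact hp _ (LM_spec o h0).1 g hg hdvd

end NormalForms

section Quotient

variable {R : Type} [CommRing R] {n : ℕ} {I : TwoSidedIdeal (FreeAlg R n)}

lemma quotProj_eq_quotProj_iff {a b : FreeAlg R n} :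
    quotProj I a = quotProj I b ↔ a - b ∈ I := by
  refine ⟨fun h => ?_, fun h => RingQuot.mkRingHom_rel h⟩
  have hw : ∀ ⦃x y : FreeAlg R n⦄, x - y ∈ I → I.ringCon.mk' x = I.ringCon.mk' y :=
    fun x y hxy => Quot.sound ((I.rel_iff x y).2 hxy)
  have := congrArg (RingQuot.lift ⟨I.ringCon.mk', hw⟩) h
  rw [quotProj, RingQuot.lift_mkRingHom_apply, RingQuot.lift_mkRingHom_apply] at this
  exact (I.rel_iff a b).1 (Quotient.eq''.1 this)

variable {Γ : Type} [AddMonoid Γ] [LinearOrder Γ] (FR : RingFiltration Γ R)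
  (o : MonomialOrdering n) (G : Set (FreeAlg R n))

lemma inducedFiltration_eq_map (γ : Γ) :
    inducedFiltration FR o G I γ =
      (normalElements o G (FR.F γ)).map (quotProj I).toAddMonoidHom := by
  refine le_antisymm ?_ ?_
  · rw [inducedFiltration, AddSubgroup.closure_le]
    rintro _ ⟨c, hc, u, hu, rfl⟩
    exact ⟨_, single_mem_normalElements hu hc, rfl⟩
  · rintro _ ⟨p, hp, rfl⟩
    change quotProj I p ∈ _
    rw [← MonoidAlgebra.sum_coeff_single p, Finsupp.sum, map_sum]
    exact sum_mem fun t ht => AddSubgroup.subset_closure ⟨_, hp.2 t, t, hp.1 t ht, rfl⟩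

lemma quotProj_mem_inducedFiltration (hG0 : ∀ g ∈ G, ∀ u, g.coeff u ∈ FR.F 0)
    (hGI : ∀ g ∈ G, g ∈ I) (hmonic : IsMonicSet o G) {γ : Γ} {p : FreeAlg R n}
    (hp : ∀ w, p.coeff w ∈ FR.F γ) : quotProj I p ∈ inducedFiltration FR o G I γ := by
  obtain ⟨r, hr, hpr⟩ := exists_normal_sub_mem_of_forall_single (R₀ := FR.F 0)
    (fun _ _ ha hb => by simpa using FR.mul_mem ha hb) hp
    fun t _ => exists_normal_sub_mem_single FR.zeroSubring hG0 hGI hmonic t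
  rw [inducedFiltration_eq_map]
  exact ⟨r, hr, (quotProj_eq_quotProj_iff.2 hpr).symm⟩

end Quotient

theorem filtration_extends_to_quotient_general {Γ : Type} [AddMonoid Γ] [LinearOrder Γ]
    {R : Type} [CommRing R] {n : ℕ} (FR : RingFiltration Γ R) (o : MonomialOrdering n)
    (G : Set (FreeAlg R n)) (I : TwoSidedIdeal (FreeAlg R n))
    (hG0 : ∀ g ∈ G, ∀ u : Word n, g.coeff u ∈ FR.F 0)
    (hGB : IsMonicGB o G I)
    (hLM1 : ∀ g ∈ G, LM o g ≠ 1) :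
    (∀ a : QuotAlg I, ∃ γ : Γ, a ∈ inducedFiltration FR o G I γ) ∧
    (∀ ⦃γ₁ γ₂ : Γ⦄, γ₁ < γ₂ →
      inducedFiltration FR o G I γ₁ ≤ inducedFiltration FR o G I γ₂) ∧
    (∀ ⦃γ τ : Γ⦄ ⦃a b : QuotAlg I⦄, a ∈ inducedFiltration FR o G I γ →
      b ∈ inducedFiltration FR o G I τ → a * b ∈ inducedFiltration FR o G I (γ + τ)) ∧
    ((1 : QuotAlg I) ∈ inducedFiltration FR o G I 0) ∧
    (∀ (γ : Γ) (lam : R),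
      lam ∈ FR.F γ ↔
        quotProj I (MonoidAlgebra.single 1 lam) ∈ inducedFiltration FR o G I γ) := by
  have hmem {γ : Γ} {p : FreeAlg R n} (hp : ∀ w, p.coeff w ∈ FR.F γ) :=
    quotProj_mem_inducedFiltration FR o G hG0 hGB.1 hGB.2.1 hp
  refine ⟨fun a => ?_, fun γ₁ γ₂ h => ?_, fun γ τ a b ha hb => ?_, ?_, fun γ c => ?_⟩
  · obtain ⟨p, rfl⟩ := RingQuot.mkRingHom_surjective _ a
    obtain ⟨γ, hγ⟩ := FR.exists_forall_apply_mem p.coeff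
    exact ⟨γ, hmem hγ⟩
  · exact AddSubgroup.closure_mono fun _ ⟨c, hc, u, hu, hx⟩ => ⟨c, FR.mono h hc, u, hu, hx⟩
  · rw [inducedFiltration_eq_map] at ha hb
    obtain ⟨p, hp, rfl⟩ := ha
    obtain ⟨q, hq, rfl⟩ := hb
    change quotProj I p * quotProj I q ∈ _
    rw [← map_mul]
    exact hmem (coeff_mul_mem (fun _ _ ha hb => FR.mul_mem ha hb) hp.2 hq.2)
  · rw [← map_one (quotProj I), MonoidAlgebra.one_def]
    exact hmem (coeff_single_mem FR.one_mem 1)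
  refine ⟨fun hc => hmem (coeff_single_mem hc 1), fun hc => ?_⟩
  rw [inducedFiltration_eq_map] at hc
  obtain ⟨p, hp, hpc⟩ := hc
  have hnormal : MonoidAlgebra.single 1 c - p ∈ normalElements o G ⊤ :=
    sub_mem (single_mem_normalElements (one_mem_NSet hLM1) (AddSubgroup.mem_top c))
      ⟨hp.1, fun w => AddSubgroup.mem_top _⟩
  have hcp := eq_zero_of_isNormal_of_mem hGB hnormal.1 (quotProj_eq_quotProj_iff.1 hpc.symm)
  rw [sub_eq_zero] at hcp
  simpa [← hcp] using hp.2 1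

/-- **Theorem 3.1.**  Let `R` be a commutative ring with an exhaustive `Γ`-filtration `FR`
(`Γ` a totally ordered monoid), `R₀ = F₀R`, and let the ideal `I` of `R⟨X₁,...,Xₙ⟩` be
generated by a subset `G ⊆ R₀⟨X⟩` which is a monic Gröbner basis of `I` with `LM(g) ≠ 1` for
all `g ∈ G`.  Then `A = R⟨X⟩/I` carries the exhaustive `Γ`-filtration
`F_γA = {Σ λᵢ w̄ᵢ : λᵢ ∈ F_γR, w̄ᵢ ∈ N̄(G)}` (it satisfies (F1)–(F4)), and
`F_γR = R ∩ F_γA` for every `γ`, i.e. `FR` extends naturally to `FA`. -/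
theorem filtration_extends_to_quotient {Γ : Type} [AddMonoid Γ] [LinearOrder Γ]
    {R : Type} [CommRing R] {n : ℕ} (FR : RingFiltration Γ R) (o : MonomialOrdering n)
    (G : Set (FreeAlg R n)) (I : TwoSidedIdeal (FreeAlg R n))
    (hG0 : ∀ g ∈ G, ∀ u : Word n, g.coeff u ∈ FR.F 0)
    (hgen : I = TwoSidedIdeal.span G) (hGB : IsMonicGB o G I)
    (hLM1 : ∀ g ∈ G, LM o g ≠ 1) :
    (∀ a : QuotAlg I, ∃ γ : Γ, a ∈ inducedFiltration FR o G I γ) ∧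
    (∀ ⦃γ₁ γ₂ : Γ⦄, γ₁ < γ₂ →
      inducedFiltration FR o G I γ₁ ≤ inducedFiltration FR o G I γ₂) ∧
    (∀ ⦃γ τ : Γ⦄ ⦃a b : QuotAlg I⦄, a ∈ inducedFiltration FR o G I γ →
      b ∈ inducedFiltration FR o G I τ → a * b ∈ inducedFiltration FR o G I (γ + τ)) ∧
    ((1 : QuotAlg I) ∈ inducedFiltration FR o G I 0) ∧
    (∀ (γ : Γ) (lam : R),
      lam ∈ FR.F γ ↔
        quotProj I (MonoidAlgebra.single 1 lam) ∈ inducedFiltration FR o G I γ) :=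
  filtration_extends_to_quotient_general FR o G I hG0 hGB hLM1
end
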